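/- Let L be a finite nonempty set of linear functionals on ℝⁿ with ℓ ∈ L ↔ -ℓ ∈ L such that B := {x | ℓ(x) ≤ 1 for all ℓ ∈ L} is bounded, and let h(x) := max_{ℓ ∈ L} ℓ(x) be the associated polyhedral norm. Let f ∈ ℝ[x₁,…,xₙ], X := {x ∈ ℝⁿ | f(x) = 0}, and let v ∈ X with ∇f(v) ≠ 0. Suppose u ∈ ℝⁿ satisfies h(u - v) ≤ h(u - x) for all x ∈ X and λ := h(u - v) > 0, and let A := {ℓ ∈ L | ℓ(u - v) = λ} be the set of active functionals (those realizing the maximum). Then the gradient ∇f(v) lies in the linear span of the vectors representing the functionals in A; equivalently, the differential of f at v is a linear combination of the functionals ℓ ∈ A. (This is the first-order tangency condition asserting that the minimal face of the ball B_λ(u) through which it touches X at v is supported by the tangent space of X at v; it underlies the defining equations of the incidence varieties used to compute the medial axis.) -/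

import Mathlib

/-- The gradient of a multivariate polynomial `f` at a point `v`: the vector of
partial derivatives `pderiv i f` evaluated at `v`. -/
noncomputable def grad {n : ℕ} (f : MvPolynomial (Fin n) ℝ)
    (v : EuclideanSpace ℝ (Fin n)) : EuclideanSpace ℝ (Fin n) :=
  WithLp.toLp 2 (fun i => MvPolynomial.eval (fun j => v j) (MvPolynomial.pderiv i f))

/-- The vector in `ℝⁿ` representing a linear functional `ℓ` (via the standard
inner product). -/
noncomputable def vecOf {n : ℕ} (ℓ : EuclideanSpace ℝ (Fin n) →ₗ[ℝ] ℝ) :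
    EuclideanSpace ℝ (Fin n) :=
  WithLp.toLp 2 (fun i => ℓ (EuclideanSpace.single i 1))

/-! The point `v` minimizes `x ↦ h (u - x)` on the hypersurface `X`. Along a curve in `X` leaving
`v` with a tangent velocity `d` (implicit function theorem), every active `ℓ (u - ·)` has derivative
`-ℓ d` and the inactive ones stay below `λ`, so minimality forces `ℓ d ≤ 0` for some active `ℓ`.
If `∇f(v)` were not in the span `S` of the active functionals, some `d ⊥ S` would satisfy
`⟪∇f(v), d⟫ ≠ 0`; tilting `u - v` along `d` into the tangent space keeps every active value at
`λ > 0`, a contradiction. -/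

open MvPolynomial Filter Topology Set

theorem HasStrictFDerivAt.exists_hasDerivAt_curve_in_fiber {𝕜 E F : Type*}
    [NontriviallyNormedField 𝕜] [CompleteSpace 𝕜] [NormedAddCommGroup E] [NormedSpace 𝕜 E]
    [CompleteSpace E] [NormedAddCommGroup F] [NormedSpace 𝕜 F] [FiniteDimensional 𝕜 F]
    {f : E → F} {f' : E →L[𝕜] F} {a d : E} (hf : HasStrictFDerivAt f f' a)
    (hf' : f'.range = ⊤) (hd : f' d = 0) :
    ∃ γ : 𝕜 → E, γ 0 = a ∧ HasDerivAt γ d 0 ∧ ∀ᶠ t in 𝓝 0, f (γ t) = f a := by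
  let d' : f'.ker := ⟨d, hd⟩
  have hline : Tendsto (fun t : 𝕜 => t • d') (𝓝 0) (𝓝 0) := by
    simpa using (tendsto_id (x := 𝓝 (0 : 𝕜))).smul_const d'
  refine ⟨fun t => hf.implicitFunction f f' hf' (f a) (t • d'), by simp, ?_, ?_⟩
  · have := (hf.to_implicitFunction hf').hasFDerivAt.comp_hasDerivAt_of_eq (0 : 𝕜)
      ((hasDerivAt_id (0 : 𝕜)).smul_const d') (by simp)
    simpa [Function.comp_def, d'] using this
  · exact (tendsto_const_nhds.prodMk_nhds hline).eventually (hf.map_implicitFunction_eq hf')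

theorem HasDerivAt.eventually_lt_of_deriv_neg {φ : ℝ → ℝ} {φ' x : ℝ} (hφ : HasDerivAt φ φ' x)
    (hφ' : φ' < 0) : ∀ᶠ t in 𝓝[>] x, φ t < φ x := by
  have hslope := (hasDerivWithinAt_iff_tendsto_slope' (s := Ioi x) (by simp)).1
    hφ.hasDerivWithinAt
  filter_upwards [hslope.eventually_lt_const hφ', self_mem_nhdsWithin] with t ht hxt
  rw [slope_def_field, div_neg_iff] at ht
  have : 0 < t - x := sub_pos.2 hxt
  rcases ht with ⟨-, h⟩ | ⟨h, -⟩ <;> linarith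

theorem eventually_sup'_lt_of_hasDerivAt {E : Type*} [NormedAddCommGroup E] [NormedSpace ℝ E]
    [FiniteDimensional ℝ E] {L : Finset (E →ₗ[ℝ] ℝ)} (hL : L.Nonempty) {c : ℝ → E} {e : E}
    {x : ℝ} (hc : HasDerivAt c e x)
    (hact : ∀ ℓ ∈ L, ℓ (c x) = L.sup' hL (fun ℓ => ℓ (c x)) → ℓ e < 0) :
    ∀ᶠ t in 𝓝[>] x, L.sup' hL (fun ℓ => ℓ (c t)) < L.sup' hL (fun ℓ => ℓ (c x)) := by
  simp only [Finset.sup'_lt_iff, eventually_all_finset]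
  intro ℓ hℓ
  have hℓc : HasDerivAt (fun t => ℓ (c t)) (ℓ e) x :=
    (LinearMap.toContinuousLinearMap ℓ).hasFDerivAt.comp_hasDerivAt x hc
  rcases (Finset.le_sup' (fun ℓ => ℓ (c x)) hℓ).eq_or_lt with hmax | hlt
  · simpa only [← hmax] using hℓc.eventually_lt_of_deriv_neg (hact ℓ hℓ hmax)
  · exact (hℓc.continuousAt.eventually_lt continuousAt_const hlt).filter_mono nhdsWithin_le_nhds

theorem exists_active_nonpos_of_isLocalMinOn {E : Type*} [NormedAddCommGroup E]
    [NormedSpace ℝ E] [FiniteDimensional ℝ E] {F : E → ℝ} {F' : E →L[ℝ] ℝ} {v u d : E}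
    (hF : HasStrictFDerivAt F F' v) (hF' : F' ≠ 0) {L : Finset (E →ₗ[ℝ] ℝ)} (hL : L.Nonempty)
    (hmin : IsLocalMinOn (fun x => L.sup' hL fun ℓ => ℓ (u - x)) (F ⁻¹' {F v}) v)
    (hd : F' d = 0) :
    ∃ ℓ ∈ L, ℓ (u - v) = L.sup' hL (fun ℓ => ℓ (u - v)) ∧ ℓ d ≤ 0 := by
  by_contra! hpos
  have hrange : F'.range = ⊤ :=
    Module.Dual.range_eq_top_of_ne_zero fun h => hF' (ContinuousLinearMap.coe_injective h)
  obtain ⟨γ, hγ0, hγ, hγF⟩ := hF.exists_hasDerivAt_curve_in_fiber hrange hd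
  have hdesc := eventually_sup'_lt_of_hasDerivAt hL (hγ.const_sub u)
    (by simpa [hγ0] using hpos)
  have hγv : Tendsto γ (𝓝[>] 0) (𝓝[F ⁻¹' {F v}] v) :=
    tendsto_nhdsWithin_iff.2 ⟨hγ0 ▸ hγ.continuousAt.tendsto.mono_left nhdsWithin_le_nhds,
      hγF.filter_mono nhdsWithin_le_nhds⟩
  obtain ⟨t, hlt, hle⟩ := (hdesc.and (hγv.eventually hmin)).exists
  simp only [hγ0] at hlt
  exact hle.not_gt hlt

theorem mem_span_of_forall_inner_eq_zero_exists_inner_nonpos {E : Type*}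
    [NormedAddCommGroup E] [InnerProductSpace ℝ E] [FiniteDimensional ℝ E] {Y : Set E}
    {g w : E} (hw : ∀ y ∈ Y, 0 < inner ℝ y w)
    (hg : ∀ d, inner ℝ g d = 0 → ∃ y ∈ Y, inner ℝ y d ≤ 0) :
    g ∈ Submodule.span ℝ Y := by
  rw [← Submodule.orthogonal_orthogonal (Submodule.span ℝ Y), Submodule.mem_orthogonal]
  intro d hd
  have hYd : ∀ y ∈ Y, inner ℝ y d = 0 := fun y hy =>
    Submodule.inner_right_of_mem_orthogonal (Submodule.subset_span hy) hd
  by_contra hgd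
  rw [real_inner_comm] at hgd
  set s := inner ℝ g w / inner ℝ g d
  obtain ⟨y, hy, hle⟩ := hg (w - s • d) (by
    rw [inner_sub_right, inner_smul_right, div_mul_cancel₀ _ hgd, sub_self])
  rw [inner_sub_right, inner_smul_right, hYd y hy, mul_zero, sub_zero] at hle
  exact hle.not_gt (hw y hy)

theorem inner_vecOf {n : ℕ} (ℓ : EuclideanSpace ℝ (Fin n) →ₗ[ℝ] ℝ)
    (x : EuclideanSpace ℝ (Fin n)) :
    inner ℝ (vecOf ℓ) x = ℓ x := by
  conv_rhs => rw [← (EuclideanSpace.basisFun (Fin n) ℝ).sum_repr x]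
  simp [vecOf, PiLp.inner_apply]

theorem hasStrictFDerivAt_eval_grad {n : ℕ} (f : MvPolynomial (Fin n) ℝ)
    (v : EuclideanSpace ℝ (Fin n)) :
    HasStrictFDerivAt (fun x : EuclideanSpace ℝ (Fin n) => eval (fun j => x j) f)
      (innerSL ℝ (grad f v)) v := by
  induction f using MvPolynomial.induction_on with
  | C a =>
    have hgrad : grad (C a) v = 0 := by ext i; simp [grad]
    simpa [hgrad] using hasStrictFDerivAt_const a v
  | add p q hp hq =>
    have hgrad : grad (p + q) v = grad p v + grad q v := by ext i; simp [grad]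
    simp only [map_add, hgrad]
    exact hp.add hq
  | mul_X p i hp =>
    have hgrad : grad (p * X i) v =
        eval (fun j => v j) p • EuclideanSpace.single i 1 + v i • grad p v := by
      ext j; simp [grad, Pi.single_apply, mul_comm, apply_ite, eq_comm]
    simp only [map_mul, eval_X, hgrad]
    refine (hp.mul (EuclideanSpace.proj i).hasStrictFDerivAt).congr_fderiv ?_
    ext x
    simp [EuclideanSpace.inner_single_left, add_comm]

theorem stmt_8_general {n : ℕ}
    (L : Finset (EuclideanSpace ℝ (Fin n) →ₗ[ℝ] ℝ)) (hL : L.Nonempty)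
    (h : EuclideanSpace ℝ (Fin n) → ℝ)
    (hh : ∀ x, h x = L.sup' hL fun ℓ => ℓ x)
    (f : MvPolynomial (Fin n) ℝ)
    (X : Set (EuclideanSpace ℝ (Fin n)))
    (hX : X = {x | MvPolynomial.eval (fun j => x j) f = 0})
    (v : EuclideanSpace ℝ (Fin n)) (hv : v ∈ X) (hgrad : grad f v ≠ 0)
    (u : EuclideanSpace ℝ (Fin n))
    (hu : ∀ x ∈ X, h (u - v) ≤ h (u - x))
    (lam : ℝ) (hlam : lam = h (u - v)) (hpos : 0 < lam) :
    grad f v ∈ Submodule.span ℝ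
      (vecOf '' {ℓ : EuclideanSpace ℝ (Fin n) →ₗ[ℝ] ℝ | ℓ ∈ L ∧ ℓ (u - v) = lam}) := by
  subst hX hlam
  have hF' : innerSL ℝ (grad f v) ≠ 0 := fun h0 =>
    hgrad (inner_self_eq_zero.1 congr($h0 (grad f v)))
  have hmin : IsLocalMinOn (fun x => L.sup' hL fun ℓ => ℓ (u - x))
      ((fun x : EuclideanSpace ℝ (Fin n) => eval (fun j => x j) f) ⁻¹' {eval (fun j => v j) f})
      v := by
    refine IsMinOn.localize fun x hx => ?_
    simp only [← hh]
    exact hu x (hx.trans hv)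
  refine mem_span_of_forall_inner_eq_zero_exists_inner_nonpos (w := u - v) ?_ fun d hd => ?_
  · rintro _ ⟨ℓ, ⟨-, hℓ⟩, rfl⟩
    rwa [inner_vecOf, hℓ]
  · obtain ⟨ℓ, hℓL, hact, hle⟩ :=
      exists_active_nonpos_of_isLocalMinOn (hasStrictFDerivAt_eval_grad f v) hF' hL hmin hd
    exact ⟨vecOf ℓ, ⟨ℓ, ⟨hℓL, by rw [hh, hact]⟩, rfl⟩, by rwa [inner_vecOf]⟩

/-- First-order tangency condition: if `u` lies in the Voronoi
cell of `v ∈ X = V(f)` with `∇f(v) ≠ 0` and `λ = h(u - v) > 0`, then `∇f(v)`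
lies in the span of the vectors representing the active functionals
`A = {ℓ ∈ L | ℓ(u - v) = λ}`. -/
theorem stmt_8 {n : ℕ} (hn : 1 ≤ n)
    (L : Finset (EuclideanSpace ℝ (Fin n) →ₗ[ℝ] ℝ)) (hL : L.Nonempty)
    (hsymm : ∀ ℓ, ℓ ∈ L ↔ -ℓ ∈ L)
    (hbdd : Bornology.IsBounded {x : EuclideanSpace ℝ (Fin n) | ∀ ℓ ∈ L, ℓ x ≤ 1})
    (h : EuclideanSpace ℝ (Fin n) → ℝ)
    (hh : ∀ x, h x = L.sup' hL fun ℓ => ℓ x)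
    (f : MvPolynomial (Fin n) ℝ)
    (X : Set (EuclideanSpace ℝ (Fin n)))
    (hX : X = {x | MvPolynomial.eval (fun j => x j) f = 0})
    (v : EuclideanSpace ℝ (Fin n)) (hv : v ∈ X) (hgrad : grad f v ≠ 0)
    (u : EuclideanSpace ℝ (Fin n))
    (hu : ∀ x ∈ X, h (u - v) ≤ h (u - x))
    (lam : ℝ) (hlam : lam = h (u - v)) (hpos : 0 < lam) :
    grad f v ∈ Submodule.span ℝ
      (vecOf '' {ℓ : EuclideanSpace ℝ (Fin n) →ₗ[ℝ] ℝ | ℓ ∈ L ∧ ℓ (u - v) = lam}) :=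
  stmt_8_general L hL h hh f X hX v hv hgrad u hu lam hlam hpos
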